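/- arXiv:1410.7050 — 3 statements merged into one kernel-verified Lean document; each statement's English description precedes it below -/
import Mathlib

section
/- For every real x and every natural number k with x² ≤ k/(2e), the tail of the Taylor series of Φ around 0 beyond degree 2k is small: |Φ(x) - (1/2 + (1/√(2π))·∑_{n=0}^{k-1} ((-1)^n x^{2n+1})/(n!·2^n·(2n+1)))| ≤ (√2/π)·(1/2)^{k-1}. -/
/-!
Integrating the exponential series of `exp (-t ^ 2 / 2)` term by term over `[0, x]` gives the
Taylor series of `Φ`. Since `n! ≥ (n / e) ^ n`, the hypothesis `x ^ 2 ≤ n / (2e)` bounds the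
`n`-th term by `(1 / 2) ^ (n + 1)`; it holds for every `n ≥ k`, so the tail beyond `k` is at
most `(1 / 2) ^ k`.
-/

open MeasureTheory

/-- The standard Gaussian CDF. -/
noncomputable def gaussCDF (x : ℝ) : ℝ :=
  (1 / Real.sqrt (2 * Real.pi)) * ∫ t in Set.Iic x, Real.exp (-t ^ 2 / 2)

open Real Set Finset
open scoped Nat

noncomputable def gaussCDFTaylorTerm (n : ℕ) (x : ℝ) : ℝ :=
  ((-1 : ℝ) ^ n * x ^ (2 * n + 1)) / ((n.factorial : ℝ) * 2 ^ n * (2 * n + 1))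

theorem integrable_exp_neg_sq_div_two : Integrable fun t : ℝ => exp (-t ^ 2 / 2) := by
  convert integrable_exp_neg_mul_sq (by norm_num : (0 : ℝ) < 1 / 2) using 3 with t
  ring

theorem integral_Iic_zero_exp_neg_sq_div_two :
    ∫ t in Iic (0 : ℝ), exp (-t ^ 2 / 2) = √(2 * π) / 2 := by
  have h := integral_comp_neg_Iic 0 fun t : ℝ => exp (-t ^ 2 / 2)
  simp only [neg_sq, neg_zero] at h
  rw [h]
  convert integral_gaussian_Ioi (1 / 2) using 3 with t <;> ring_nf

theorem gaussCDF_eq_half_add_intervalIntegral (x : ℝ) :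
    gaussCDF x = 1 / 2 + 1 / √(2 * π) * ∫ t in (0 : ℝ)..x, exp (-t ^ 2 / 2) := by
  have hsqrt : 0 < √(2 * π) := by positivity
  rw [gaussCDF, ← intervalIntegral.integral_Iic_sub_Iic integrable_exp_neg_sq_div_two.integrableOn
    integrable_exp_neg_sq_div_two.integrableOn, integral_Iic_zero_exp_neg_sq_div_two]
  field_simp
  ring

theorem integral_neg_sq_div_two_pow_div_factorial (n : ℕ) (x : ℝ) :
    ∫ t in (0 : ℝ)..x, (-(t ^ 2 / 2)) ^ n / n ! = gaussCDFTaylorTerm n x := by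
  have h : ∀ t : ℝ, (-(t ^ 2 / 2)) ^ n / n ! = (-1) ^ n / (n ! * 2 ^ n) * t ^ (2 * n) :=
    fun t => by
      rw [neg_pow, div_pow, ← pow_mul]
      ring
  simp_rw [h, intervalIntegral.integral_const_mul, integral_pow, gaussCDFTaylorTerm]
  rw [zero_pow (by omega), sub_zero]
  push_cast
  field_simp

theorem hasSum_gaussCDFTaylorTerm (x : ℝ) :
    HasSum (fun n => gaussCDFTaylorTerm n x) (∫ t in (0 : ℝ)..x, exp (-t ^ 2 / 2)) := by
  have h := intervalIntegral.hasSum_integral_of_dominated_convergence (μ := volume) (a := 0)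
    (b := x) (F := fun n (t : ℝ) => (-(t ^ 2 / 2)) ^ n / n !) (f := fun t => exp (-t ^ 2 / 2))
    (fun n _ => (x ^ 2 / 2) ^ n / n !) (fun n => (by fun_prop : Continuous _).aestronglyMeasurable)
    (fun n => ae_of_all _ fun t ht => ?bound) (ae_of_all _ fun _ _ => summable_pow_div_factorial _)
    intervalIntegrable_const (ae_of_all _ fun t _ => ?series)
  · simpa only [integral_neg_sq_div_two_pow_div_factorial] using h
  case bound =>
    have ht : |t| ≤ |x| := by simpa using abs_sub_left_of_mem_uIcc (uIoc_subset_uIcc ht)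
    rw [norm_div, norm_pow, norm_neg, Real.norm_of_nonneg (by positivity),
      Real.norm_of_nonneg (by positivity)]
    gcongr (?_ / 2) ^ n / _
    exact sq_le_sq.mpr ht
  case series =>
    rw [neg_div, exp_eq_exp_ℝ]
    exact NormedSpace.expSeries_div_hasSum_exp _

theorem pow_div_exp_one_pow_le_factorial (n : ℕ) : ((n : ℝ) / exp 1) ^ n ≤ n ! := by
  have h := Real.pow_div_factorial_le_exp (n : ℝ) n.cast_nonneg n
  rw [← exp_one_pow, div_le_iff₀ (by positivity)] at h
  rw [div_pow, div_le_iff₀ (by positivity)]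
  linarith

theorem abs_gaussCDFTaylorTerm_le (n : ℕ) (x : ℝ) :
    |gaussCDFTaylorTerm n x| ≤ |x| * (x ^ 2 / 2) ^ n / n ! := by
  have hden : (1 : ℝ) ≤ 2 * n + 1 := by linarith [n.cast_nonneg (α := ℝ)]
  calc |gaussCDFTaylorTerm n x| = |x| * (x ^ 2 / 2) ^ n / n ! / (2 * n + 1) := by
        rw [gaussCDFTaylorTerm, abs_div, abs_of_pos (a := (n ! : ℝ) * 2 ^ n * (2 * n + 1))
          (by positivity), abs_mul, abs_pow, abs_neg, abs_one, one_pow, one_mul, abs_pow,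
          pow_succ', pow_mul, sq_abs, div_pow]
        field_simp
    _ ≤ |x| * (x ^ 2 / 2) ^ n / n ! := div_le_self (by positivity) hden

theorem abs_gaussCDFTaylorTerm_le_half_pow {n : ℕ} {x : ℝ} (hx : x ^ 2 ≤ n / (2 * exp 1)) :
    |gaussCDFTaylorTerm n x| ≤ (1 / 2) ^ (n + 1) := by
  have he : (2 : ℝ) ≤ exp 1 := by linarith [add_one_le_exp (1 : ℝ)]
  have hx_abs : |x| ≤ 2 ^ n / 2 := by
    have hn : (n : ℝ) ≤ 2 ^ n := by exact_mod_cast Nat.lt_two_pow_self.le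
    have : x ^ 2 ≤ n / 4 := hx.trans (by gcongr; linarith)
    rw [← abs_of_nonneg (by positivity : (0 : ℝ) ≤ 2 ^ n / 2)]
    apply sq_le_sq.mp
    nlinarith [one_le_pow₀ (M₀ := ℝ) (a := 2) (n := n) (by norm_num)]
  have hpow : (x ^ 2 / 2) ^ n ≤ n ! / 4 ^ n :=
    calc (x ^ 2 / 2) ^ n ≤ (n / exp 1 / 4) ^ n := by
          refine pow_le_pow_left₀ (by positivity) ?_ n
          calc x ^ 2 / 2 ≤ n / (2 * exp 1) / 2 := by gcongr
            _ = n / exp 1 / 4 := by ring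
      _ ≤ n ! / 4 ^ n := by
          rw [div_pow]
          gcongr
          exact pow_div_exp_one_pow_le_factorial n
  calc |gaussCDFTaylorTerm n x| ≤ |x| * (x ^ 2 / 2) ^ n / n ! := abs_gaussCDFTaylorTerm_le n x
    _ ≤ 2 ^ n / 2 * (n ! / 4 ^ n) / n ! := by gcongr
    _ = (1 / 2) ^ (n + 1) := by
      rw [show (4 : ℝ) ^ n = 2 ^ n * 2 ^ n by rw [← mul_pow]; norm_num, one_div, inv_pow,
        pow_succ]
      field_simp

theorem norm_sub_sum_range_le_of_hasSum {E : Type*} [SeminormedAddCommGroup E] {f : ℕ → E}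
    {s : E} (hf : HasSum f s) {k : ℕ} (hf_le : ∀ n, k ≤ n → ‖f n‖ ≤ (1 / 2) ^ (n + 1)) :
    ‖s - ∑ n ∈ range k, f n‖ ≤ (1 / 2) ^ k := by
  refine ((hasSum_nat_add_iff' k).mpr hf).norm_le_of_bounded
    (hasSum_geometric_two' ((1 / 2) ^ k)) fun i => ?_
  calc ‖f (i + k)‖ ≤ (1 / 2) ^ (i + k + 1) := hf_le _ (Nat.le_add_left k i)
    _ = (1 / 2) ^ k / 2 / 2 ^ i := by rw [pow_succ, pow_add, one_div, inv_pow]; ring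

theorem one_div_sqrt_two_mul_pi_le : 1 / √(2 * π) ≤ √2 / π := by
  have hsqrt_pi : √π ≤ 2 := Real.sqrt_le_iff.mpr ⟨by norm_num, by linarith [pi_le_four]⟩
  rw [div_le_div_iff₀ (by positivity) pi_pos, one_mul, sqrt_mul zero_le_two, ← mul_assoc,
    mul_self_sqrt zero_le_two]
  nlinarith [sq_sqrt pi_pos.le, sqrt_nonneg π]

/-- Taylor truncation error of the Gaussian CDF. -/
theorem gaussCDF_taylor_truncation (x : ℝ) (k : ℕ)
    (hx : x ^ 2 ≤ k / (2 * Real.exp 1)) :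
    |gaussCDF x - (1 / 2 + (1 / Real.sqrt (2 * Real.pi)) *
        ∑ n ∈ Finset.range k,
          ((-1 : ℝ) ^ n * x ^ (2 * n + 1)) /
            ((n.factorial : ℝ) * 2 ^ n * (2 * n + 1)))|
      ≤ (Real.sqrt 2 / Real.pi) * (1 / 2) ^ (k - 1) := by
  have htail : |(∫ t in (0 : ℝ)..x, exp (-t ^ 2 / 2)) - ∑ n ∈ range k, gaussCDFTaylorTerm n x|
      ≤ (1 / 2) ^ k :=
    norm_sub_sum_range_le_of_hasSum (hasSum_gaussCDFTaylorTerm x) fun n hn =>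
      abs_gaussCDFTaylorTerm_le_half_pow (hx.trans (by gcongr))
  rw [gaussCDF_eq_half_add_intervalIntegral]
  calc _ = 1 / √(2 * π) *
        |(∫ t in (0 : ℝ)..x, exp (-t ^ 2 / 2)) - ∑ n ∈ range k, gaussCDFTaylorTerm n x| := by
        rw [add_sub_add_left_eq_sub, ← mul_sub, abs_mul, abs_of_pos (by positivity)]
        rfl
    _ ≤ √2 / π * (1 / 2) ^ (k - 1) :=
        mul_le_mul one_div_sqrt_two_mul_pi_le
          (htail.trans (pow_le_pow_of_le_one (by norm_num) (by norm_num) (k.sub_le 1)))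
          (by positivity) (by positivity)
end

section
/- Let p : ℝ → ℝ be a polynomial of degree at most r, and suppose |p(x)| ≤ b for all x in the interval [-a, a], where a, b > 0. Then for every x with |x| ≥ a, |p(x)| ≤ b · (2|x|/a)^r. -/
open Polynomial Finset Real

namespace PolyGrowthAux


/-- natDegree bound for Chebyshev T. -/
lemma T_natDegree_le : ∀ n : ℕ, (Polynomial.Chebyshev.T ℝ n).natDegree ≤ n ∧
    (Polynomial.Chebyshev.T ℝ (n + 1)).natDegree ≤ n + 1 := by
  intro n
  induction n with
  | zero =>
    constructor
    · simp [Polynomial.Chebyshev.T_zero]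
    · simpa [Polynomial.Chebyshev.T_one] using Polynomial.natDegree_X_le
  | succ n ih =>
    refine ⟨by exact_mod_cast ih.2, ?_⟩
    have h := Polynomial.Chebyshev.T_add_two ℝ (n : ℤ)
    have hcast : ((n : ℤ) + 1 + 1 : ℤ) = ((n : ℤ) + 2) := by ring
    have : (Polynomial.Chebyshev.T ℝ ((n : ℤ) + 2)).natDegree ≤ n + 2 := by
      rw [h]
      refine (Polynomial.natDegree_sub_le _ _).trans ?_
      have h1 : (2 * X * Polynomial.Chebyshev.T ℝ ((n : ℤ) + 1)).natDegree ≤ n + 2 := by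
        refine (Polynomial.natDegree_mul_le).trans ?_
        have h2 : (2 * X : ℝ[X]).natDegree ≤ 1 := by
          refine (Polynomial.natDegree_mul_le).trans ?_
          simp
        have h3 : (Polynomial.Chebyshev.T ℝ ((n : ℤ) + 1)).natDegree ≤ n + 1 := by
          exact_mod_cast ih.2
        omega
      have h4 : (Polynomial.Chebyshev.T ℝ (n : ℤ)).natDegree ≤ n := ih.1
      omega
    have hc2 : ((n + 1 : ℕ) : ℤ) + 1 = (n : ℤ) + 2 := by push_cast; ring
    rw [hc2]
    exact this

/-- On `[1, ∞)`, `T n` is at least 1 and monotone in `n`. -/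
lemma T_one_le {x : ℝ} (hx : 1 ≤ x) : ∀ n : ℕ,
    1 ≤ (Polynomial.Chebyshev.T ℝ n).eval x ∧
      (Polynomial.Chebyshev.T ℝ n).eval x ≤ (Polynomial.Chebyshev.T ℝ (n + 1)).eval x := by
  intro n
  induction n with
  | zero =>
    simp [Polynomial.Chebyshev.T_zero, Polynomial.Chebyshev.T_one, hx]
  | succ n ih =>
    obtain ⟨h1, h2⟩ := ih
    have h := Polynomial.Chebyshev.T_add_two ℝ (n : ℤ)
    have hc2 : ((n + 1 : ℕ) : ℤ) + 1 = (n : ℤ) + 2 := by push_cast; ring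
    have hc1 : ((n + 1 : ℕ) : ℤ) = (n : ℤ) + 1 := by push_cast; ring
    have heval : (Polynomial.Chebyshev.T ℝ ((n : ℤ) + 2)).eval x =
        2 * x * (Polynomial.Chebyshev.T ℝ ((n : ℤ) + 1)).eval x
          - (Polynomial.Chebyshev.T ℝ (n : ℤ)).eval x := by
      rw [h]; simp
    constructor
    · rw [hc1]; linarith
    · rw [hc2, heval, hc1]
      nlinarith [h1, h2, hx]

/-- `T n x ≤ (2x)^n` for `x ≥ 1`. -/
lemma T_le_pow {x : ℝ} (hx : 1 ≤ x) : ∀ n : ℕ,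
    (Polynomial.Chebyshev.T ℝ n).eval x ≤ (2 * x) ^ n ∧
      (Polynomial.Chebyshev.T ℝ (n + 1)).eval x ≤ (2 * x) ^ (n + 1) := by
  intro n
  induction n with
  | zero =>
    constructor
    · simp [Polynomial.Chebyshev.T_zero]
    · simp [Polynomial.Chebyshev.T_one]; linarith
  | succ n ih =>
    obtain ⟨h1, h2⟩ := ih
    refine ⟨by exact_mod_cast h2, ?_⟩
    have h := Polynomial.Chebyshev.T_add_two ℝ (n : ℤ)
    have hc2 : ((n + 1 : ℕ) : ℤ) + 1 = (n : ℤ) + 2 := by push_cast; ring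
    have hc1 : ((n + 1 : ℕ) : ℤ) = (n : ℤ) + 1 := by push_cast; ring
    have heval : (Polynomial.Chebyshev.T ℝ ((n : ℤ) + 2)).eval x =
        2 * x * (Polynomial.Chebyshev.T ℝ ((n : ℤ) + 1)).eval x
          - (Polynomial.Chebyshev.T ℝ (n : ℤ)).eval x := by
      rw [h]; simp
    rw [hc2, heval]
    have hT1 : (1 : ℝ) ≤ (Polynomial.Chebyshev.T ℝ (n : ℤ)).eval x := (T_one_le hx n).1
    have h2' : (Polynomial.Chebyshev.T ℝ ((n : ℤ) + 1)).eval x ≤ (2 * x) ^ (n + 1) := by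
      rw [← hc1]; exact h2
    have h2x : (0 : ℝ) ≤ 2 * x := by linarith
    calc 2 * x * (Polynomial.Chebyshev.T ℝ ((n : ℤ) + 1)).eval x
          - (Polynomial.Chebyshev.T ℝ (n : ℤ)).eval x
        ≤ 2 * x * (2 * x) ^ (n + 1) := by nlinarith
      _ = (2 * x) ^ (n + 2) := by ring

lemma key (q : Polynomial ℝ) (r : ℕ) (hr : 1 ≤ r) (b : ℝ)
    (hdeg : q.natDegree ≤ r) (hbound : ∀ y ∈ Set.Icc (-1 : ℝ) 1, |q.eval y| ≤ b)
    (x : ℝ) (hx : 1 < x) :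
    |q.eval x| ≤ b * (Polynomial.Chebyshev.T ℝ r).eval x := by
  classical
  have hrpos : (0 : ℝ) < r := by exact_mod_cast hr
  set v : ℕ → ℝ := fun k => Real.cos (k * π / r) with hv
  set s : Finset ℕ := Finset.range (r + 1) with hs
  -- angles in [0, π]
  have hangle : ∀ k : ℕ, k ≤ r → (k * π / r : ℝ) ∈ Set.Icc (0 : ℝ) π := by
    intro k hk
    constructor
    · positivity
    · rw [div_le_iff₀ hrpos]
      have : (k : ℝ) ≤ r := by exact_mod_cast hk
      nlinarith [Real.pi_pos]
  -- v is strictly decreasing on 0..r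
  have hanti : ∀ j k : ℕ, j < k → k ≤ r → v k < v j := by
    intro j k hjk hk
    apply Real.strictAntiOn_cos (hangle j (le_trans (le_of_lt hjk) hk)) (hangle k hk)
    have hj : (j : ℝ) < k := by exact_mod_cast hjk
    have : (j : ℝ) * π < k * π := by nlinarith [Real.pi_pos]
    exact div_lt_div_of_pos_right this hrpos
  -- v maps into [-1, 1]
  have hv1 : ∀ k : ℕ, v k ≤ 1 := fun k => Real.cos_le_one _
  have hvm1 : ∀ k : ℕ, -1 ≤ v k := fun k => Real.neg_one_le_cos _
  -- injectivity
  have hinj : Set.InjOn v s := by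
    intro j hj k hk hjk
    simp only [hs, coe_range, Set.mem_Iio] at hj hk
    by_contra hne
    rcases Nat.lt_or_ge j k with h | h
    · exact absurd hjk (ne_of_gt (hanti j k h (by omega)))
    · have : k < j := by omega
      exact absurd hjk.symm (ne_of_gt (hanti k j this (by omega)))
  have hcard : #s = r + 1 := by simp [hs]
  -- q equals its interpolant
  have hdegq : q.degree < (#s : ℕ) := by
    rw [hcard]
    calc q.degree ≤ (q.natDegree : WithBot ℕ) := Polynomial.degree_le_natDegree
      _ ≤ (r : WithBot ℕ) := by exact_mod_cast hdeg
      _ < ((r + 1 : ℕ) : WithBot ℕ) := by exact_mod_cast Nat.lt_succ_self r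
  have hq : q = Lagrange.interpolate s v (fun k => q.eval (v k)) :=
    Lagrange.eq_interpolate hinj hdegq
  -- T equals the interpolant of (-1)^k
  have hdegT : (Polynomial.Chebyshev.T ℝ r).degree < (#s : ℕ) := by
    rw [hcard]
    calc (Polynomial.Chebyshev.T ℝ r).degree
        ≤ ((Polynomial.Chebyshev.T ℝ r).natDegree : WithBot ℕ) := Polynomial.degree_le_natDegree
      _ ≤ (r : WithBot ℕ) := by exact_mod_cast (T_natDegree_le r).1
      _ < ((r + 1 : ℕ) : WithBot ℕ) := by exact_mod_cast Nat.lt_succ_self r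
  have hTval : ∀ k : ℕ, (Polynomial.Chebyshev.T ℝ r).eval (v k) = (-1 : ℝ) ^ k := by
    intro k
    have h1 : (Polynomial.Chebyshev.T ℝ r).eval (Real.cos (k * π / r)) =
        Real.cos ((r : ℤ) * (k * π / r)) := Polynomial.Chebyshev.T_real_cos _ _
    have h2 : ((r : ℤ) : ℝ) * (k * π / r) = k * π := by
      push_cast
      field_simp
    rw [hv]
    simp only []
    rw [h1, h2]
    have := Real.cos_nat_mul_pi_sub 0 k
    simpa using this
  have hT : Polynomial.Chebyshev.T ℝ r = Lagrange.interpolate s v (fun k => (-1 : ℝ) ^ k) := by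
    rw [Lagrange.eq_interpolate hinj hdegT]
    exact Lagrange.interpolate_eq_of_values_eq_on _ _ (fun k _ => hTval k)
  -- evaluation of interpolants as sums
  have hevalsum : ∀ f : ℕ → ℝ, (Lagrange.interpolate s v f).eval x =
      ∑ k ∈ s, f k * (Lagrange.basis s v k).eval x := by
    intro f
    rw [Lagrange.interpolate_apply, Polynomial.eval_finset_sum]
    exact Finset.sum_congr rfl fun k _ => by rw [Polynomial.eval_mul, Polynomial.eval_C]
  -- the sign of the basis polynomials at x
  set ℓ : ℕ → ℝ := fun k => (Lagrange.basis s v k).eval x with hℓ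
  have hsign : ∀ k ∈ s, |ℓ k| = (-1 : ℝ) ^ k * ℓ k := by
    intro k hk
    have hkr : k ≤ r := by simpa [hs, Nat.lt_succ_iff] using hk
    have hform : ℓ k = ∏ j ∈ s.erase k, ((v k - v j)⁻¹ * (x - v j)) := by
      rw [hℓ]
      simp only [Lagrange.basis, Polynomial.eval_prod]
      exact Finset.prod_congr rfl fun j _ => by
        simp [Lagrange.basisDivisor]
    set f : ℕ → ℝ := fun j => (v k - v j)⁻¹ * (x - v j) with hf
    have hsplit : s.erase k = (Finset.range k) ∪ (Finset.Ico (k + 1) (r + 1)) := by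
      ext j
      simp only [hs, Finset.mem_erase, Finset.mem_range, Finset.mem_union, Finset.mem_Ico]
      omega
    have hdisj : Disjoint (Finset.range k) (Finset.Ico (k + 1) (r + 1)) := by
      rw [Finset.disjoint_left]
      intro j hj hj'
      simp only [Finset.mem_range] at hj
      simp only [Finset.mem_Ico] at hj'
      omega
    have hneg : ∀ j ∈ Finset.range k, f j < 0 := by
      intro j hj
      simp only [Finset.mem_range] at hj
      have h1 : v k < v j := hanti j k hj hkr
      have h2 : 0 < x - v j := by have := hv1 j; linarith
      have h3 : (v k - v j)⁻¹ < 0 := inv_lt_zero.mpr (by linarith)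
      exact mul_neg_of_neg_of_pos h3 h2
    have hpos : ∀ j ∈ Finset.Ico (k + 1) (r + 1), 0 < f j := by
      intro j hj
      simp only [Finset.mem_Ico] at hj
      have h1 : v j < v k := hanti k j hj.1 (by omega)
      have h2 : 0 < x - v j := by have := hv1 j; linarith
      have h3 : 0 < (v k - v j)⁻¹ := inv_pos.mpr (by linarith)
      exact mul_pos h3 h2
    have hA : ∏ j ∈ Finset.range k, f j = (-1 : ℝ) ^ k * ∏ j ∈ Finset.range k, (-f j) := by
      have : ∀ j ∈ Finset.range k, f j = (-1) * (-f j) := fun j _ => by ring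
      rw [Finset.prod_congr rfl this, Finset.prod_mul_distrib, Finset.prod_const,
        Finset.card_range]
    have hApos : 0 < ∏ j ∈ Finset.range k, (-f j) :=
      Finset.prod_pos fun j hj => by linarith [hneg j hj]
    have hBpos : 0 < ∏ j ∈ Finset.Ico (k + 1) (r + 1), f j := Finset.prod_pos hpos
    have hℓeq : ℓ k = (-1 : ℝ) ^ k * ((∏ j ∈ Finset.range k, (-f j)) *
        ∏ j ∈ Finset.Ico (k + 1) (r + 1), f j) := by
      rw [hform, hsplit, Finset.prod_union hdisj, hA]; ring
    have hnn : 0 ≤ (-1 : ℝ) ^ k * ℓ k := by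
      rw [hℓeq, ← mul_assoc, ← mul_pow]
      simp only [neg_mul_neg, one_mul, one_pow]
      positivity
    calc |ℓ k| = |(-1 : ℝ) ^ k * ℓ k| := by
          rw [abs_mul, abs_pow, abs_neg, abs_one, one_pow, one_mul]
      _ = (-1 : ℝ) ^ k * ℓ k := abs_of_nonneg hnn
  -- node values of q are bounded
  have hqval : ∀ k : ℕ, |q.eval (v k)| ≤ b := fun k =>
    hbound (v k) ⟨hvm1 k, hv1 k⟩
  have hb0 : 0 ≤ b := le_trans (abs_nonneg _) (hqval 0)
  -- putting it together
  have h1 : q.eval x = ∑ k ∈ s, q.eval (v k) * ℓ k := by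
    conv_lhs => rw [hq]
    exact hevalsum _
  have h2 : (Polynomial.Chebyshev.T ℝ r).eval x = ∑ k ∈ s, (-1 : ℝ) ^ k * ℓ k := by
    conv_lhs => rw [hT]
    exact hevalsum _
  rw [h1]
  calc |∑ k ∈ s, q.eval (v k) * ℓ k| ≤ ∑ k ∈ s, |q.eval (v k) * ℓ k| :=
        Finset.abs_sum_le_sum_abs _ _
    _ ≤ ∑ k ∈ s, b * ((-1 : ℝ) ^ k * ℓ k) := by
        refine Finset.sum_le_sum fun k hk => ?_
        rw [abs_mul, hsign k hk]
        exact mul_le_mul_of_nonneg_right (hqval k)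
          (by rw [← hsign k hk]; exact abs_nonneg _)
    _ = b * (Polynomial.Chebyshev.T ℝ r).eval x := by
        rw [h2, Finset.mul_sum]



end PolyGrowthAux

/-- Chebyshev-type growth bound for polynomials bounded on `[-a, a]`. -/
theorem poly_growth_outside_interval (p : Polynomial ℝ) (r : ℕ) (a b : ℝ)
    (ha : 0 < a) (hb : 0 < b) (hdeg : p.natDegree ≤ r)
    (hbound : ∀ x ∈ Set.Icc (-a) a, |p.eval x| ≤ b) :
    ∀ x : ℝ, a ≤ |x| → |p.eval x| ≤ b * (2 * |x| / a) ^ r := by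
  intro x hx
  have habs : 0 < |x| := lt_of_lt_of_le ha hx
  have hxne : |x| ≠ 0 := ne_of_gt habs
  have h2x1 : (1 : ℝ) ≤ 2 * |x| / a := by
    rw [le_div_iff₀ ha]; nlinarith
  have hpow1 : (1 : ℝ) ≤ (2 * |x| / a) ^ r := one_le_pow₀ h2x1
  rcases Nat.eq_zero_or_pos r with hr0 | hr
  · subst hr0
    have hp : p = Polynomial.C (p.coeff 0) := Polynomial.eq_C_of_natDegree_le_zero hdeg
    have h0 := hbound 0 ⟨by linarith, by linarith⟩
    rw [hp] at h0 ⊢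
    simpa using h0
  · set c : ℝ := a * x / |x| with hc
    have hcabs : |c| = a := by
      rw [hc, abs_div, abs_mul, abs_abs, abs_of_pos ha]
      field_simp
    have hcne : c ≠ 0 := by
      intro h; rw [h, abs_zero] at hcabs; linarith
    set q : Polynomial ℝ := p.comp (Polynomial.C c * Polynomial.X) with hq
    have hqeval : ∀ y : ℝ, q.eval y = p.eval (c * y) := fun y => by
      simp [hq, Polynomial.eval_comp]
    have hqdeg : q.natDegree ≤ r := by
      rw [hq, Polynomial.natDegree_comp, Polynomial.natDegree_C_mul_X c hcne, mul_one]
      exact hdeg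
    have hqbound : ∀ y ∈ Set.Icc (-1 : ℝ) 1, |q.eval y| ≤ b := by
      intro y hy
      rw [hqeval]
      apply hbound
      have hyabs : |y| ≤ 1 := abs_le.mpr ⟨hy.1, hy.2⟩
      have : |c * y| ≤ a := by
        rw [abs_mul, hcabs]
        nlinarith
      exact ⟨(abs_le.mp this).1, (abs_le.mp this).2⟩
    set t : ℝ := |x| / a with ht
    have ht1 : 1 ≤ t := (one_le_div ha).mpr hx
    have hct : c * t = x := by
      rw [hc, ht]
      field_simp
    have h2t : 2 * t = 2 * |x| / a := by rw [ht]; ring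
    rcases eq_or_lt_of_le ht1 with h1 | h1
    · -- |x| = a : x is in the interval
      have hxa : |x| = a := by
        have : t = 1 := h1.symm
        rw [ht] at this
        field_simp at this
        linarith
      have hmem : x ∈ Set.Icc (-a) a := by
        have := abs_le.mp (le_of_eq hxa)
        exact ⟨this.1, this.2⟩
      have hb1 : |p.eval x| ≤ b := hbound x hmem
      nlinarith
    · have hkey := PolyGrowthAux.key q r hr b hqdeg hqbound t h1
      rw [hqeval, hct] at hkey
      have hTle := (PolyGrowthAux.T_le_pow (le_of_lt h1) r).1
      calc |p.eval x| ≤ b * (Polynomial.Chebyshev.T ℝ r).eval t := hkey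
        _ ≤ b * (2 * t) ^ r := by
            exact mul_le_mul_of_nonneg_left hTle (le_of_lt hb)
        _ = b * (2 * |x| / a) ^ r := by rw [h2t]
end

section
/- Jackson's theorem: for every L-Lipschitz function f : [-1,1] → ℝ and every natural number r ≥ 1, there exists a polynomial p of degree at most r such that sup_{x ∈ [-1,1]} |p(x) - f(x)| ≤ 6L/r. -/
/-!
Write `x = cos θ` and sample `f ∘ cos` at the `N` nodes `2πt/N`. Averaging the samples against
the Jackson kernel `K(v) = |1 + e^{iv} + ⋯ + e^{i(n-1)v}|⁴` centred at `θ`, and symmetrising in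
`θ ↦ -θ`, gives a cosine polynomial of degree `2n - 2` in `θ`, i.e. a polynomial in `cos θ`.
For `N ≥ 2n - 1` the characters `t ↦ e^{2πimt/N}` with `|m| < N` are orthogonal on the nodes,
so the mass of `K` at the nodes is, independently of `θ`, `N` times the sum of squares of the
coefficients of `(1 + X + ⋯ + X^{n-1})²`; these coefficients sum to `n²`, so the mass is at least
`N n⁴/(2n-1)`.
Since `|cos u - cos θ| ≤ 2|sin((u-θ)/2)|` and `K(v) sin²(v/2) ≤ |1 + ⋯ + e^{i(n-1)v}|²`, whose mass
is `N n`, Cauchy–Schwarz bounds the error by `2L √(N n / mass K) ≤ 2√2 L/n ≤ 6L/r`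
for `n = ⌊r/2⌋ + 1`.
-/

open Finset Polynomial Real

noncomputable section

lemma abs_centerMass_sub_le {ι : Type*} {s : Finset ι} {w g e : ι → ℝ} {y c B : ℝ}
    (hw : ∀ i ∈ s, 0 ≤ w i) (hs : 0 < ∑ i ∈ s, w i) (hc : 0 ≤ c)
    (hg : ∀ i ∈ s, |g i - y| ≤ c * |e i|) (hB : ∑ i ∈ s, w i * e i ^ 2 ≤ B) :
    |s.centerMass w g - y| ≤ c * √(B / ∑ i ∈ s, w i) := by
  set A := ∑ i ∈ s, w i
  have hcs : ∑ i ∈ s, w i * |e i| ≤ √(A * B) := by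
    refine Real.le_sqrt_of_sq_le ((sum_sq_le_sum_mul_sum_of_sq_le_mul s hw
      (fun i hi => mul_nonneg (hw i hi) (sq_nonneg (e i))) fun i _ => ?_).trans ?_)
    · rw [mul_pow, sq_abs, sq, mul_assoc]
    · exact mul_le_mul_of_nonneg_left hB hs.le
  have hdev : s.centerMass w g - y = A⁻¹ * ∑ i ∈ s, w i * (g i - y) := by
    simp only [mul_sub, sum_sub_distrib, ← sum_mul]
    rw [← mul_assoc, inv_mul_cancel₀ hs.ne', one_mul]
    rfl
  calc |s.centerMass w g - y|
      ≤ A⁻¹ * ∑ i ∈ s, w i * (c * |e i|) := by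
        rw [hdev, abs_mul, abs_inv, abs_of_pos hs]
        gcongr
        refine (abs_sum_le_sum_abs _ _).trans (sum_le_sum fun i hi => ?_)
        rw [abs_mul, abs_of_nonneg (hw i hi)]
        exact mul_le_mul_of_nonneg_left (hg i hi) (hw i hi)
    _ = A⁻¹ * (c * ∑ i ∈ s, w i * |e i|) := by
        simp_rw [mul_left_comm (w _) c, ← mul_sum]
    _ ≤ A⁻¹ * (c * √(A * B)) := by gcongr
    _ = c * √(B / A) := by
        have hA : √A ≠ 0 := (Real.sqrt_pos.2 hs).ne'
        rw [Real.sqrt_mul hs.le, Real.sqrt_div' _ hs.le]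
        field_simp
        rw [Real.sq_sqrt hs.le]
        ring

lemma abs_cos_sub_cos_le (x y : ℝ) : |cos x - cos y| ≤ 2 * |sin ((x - y) / 2)| := by
  rw [cos_sub_cos, abs_mul, abs_mul, abs_neg, abs_two]
  have := abs_sin_le_one ((x + y) / 2)
  have := abs_nonneg (sin ((x - y) / 2))
  nlinarith

lemma abs_comp_cos_sub_comp_cos_le {f : ℝ → ℝ} {L : ℝ} (hL : 0 ≤ L)
    (hf : ∀ x ∈ Set.Icc (-1 : ℝ) 1, ∀ y ∈ Set.Icc (-1 : ℝ) 1, |f x - f y| ≤ L * |x - y|)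
    (u θ : ℝ) : |f (cos u) - f (cos θ)| ≤ 2 * L * |sin ((u - θ) / 2)| :=
  calc |f (cos u) - f (cos θ)| ≤ L * |cos u - cos θ| :=
        hf _ ⟨neg_one_le_cos u, cos_le_one u⟩ _ ⟨neg_one_le_cos θ, cos_le_one θ⟩
    _ ≤ L * (2 * |sin ((u - θ) / 2)|) := mul_le_mul_of_nonneg_left (abs_cos_sub_cos_le u θ) hL
    _ = 2 * L * |sin ((u - θ) / 2)| := by ring

def node (N t : ℕ) : ℝ := 2 * π * t / N

lemma sum_cos_mul_node_sub {N j k : ℕ} (hj : j < N) (hk : k < N) (θ : ℝ) :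
    ∑ t ∈ range N, cos ((j - k : ℝ) * (node N t - θ)) = if j = k then (N : ℝ) else 0 := by
  split_ifs with hjk
  · simp [hjk]
  set m : ℤ := j - k
  have hζ := Complex.isPrimitiveRoot_exp N (by omega)
  set ζ := Complex.exp (2 * π * Complex.I / N)
  have hterm : ∀ t, Complex.exp (((j - k : ℝ) * (node N t - θ) : ℝ) * Complex.I)
      = Complex.exp (-((m * θ : ℝ) * Complex.I)) * (ζ ^ m) ^ t := by
    intro t
    rw [← zpow_natCast, ← zpow_mul, ← Complex.exp_int_mul, ← Complex.exp_add]
    congr 1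
    push_cast [node, m]
    field_simp
    ring
  have hsum : ∑ t ∈ range N, (ζ ^ m) ^ t = 0 := by
    have hζm : (ζ ^ m) ^ N = 1 := by
      rw [← zpow_natCast, ← zpow_mul, mul_comm, zpow_mul, zpow_natCast, hζ.pow_eq_one, one_zpow]
    have hζm' : ζ ^ m ≠ 1 := by
      rw [Ne, hζ.zpow_eq_one_iff_dvd]
      intro hdvd
      have := Int.eq_zero_of_abs_lt_dvd hdvd (by rw [abs_lt]; omega)
      omega
    rw [geom_sum_eq hζm', hζm, sub_self, zero_div]
  have := congrArg Complex.re (congrArg (Complex.exp (-((m * θ : ℝ) * Complex.I)) * ·) hsum)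
  simpa only [mul_sum, ← hterm, mul_zero, Complex.re_sum, Complex.exp_ofReal_mul_I_re,
    Complex.zero_re] using this

def trigEval (P : ℝ[X]) (v : ℝ) : ℂ := aeval (Complex.exp (v * Complex.I)) P

lemma normSq_trigEval {P : ℝ[X]} {D : ℕ} (hD : P.natDegree < D) (v : ℝ) :
    Complex.normSq (trigEval P v)
      = ∑ j ∈ range D, ∑ k ∈ range D, P.coeff j * P.coeff k * cos ((j - k : ℝ) * v) := by
  have hexp : ∀ j k : ℕ,
      Complex.exp (v * Complex.I) ^ j * (starRingEnd ℂ) (Complex.exp (v * Complex.I)) ^ k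
        = Complex.exp (((j - k : ℝ) * v : ℝ) * Complex.I) := by
    intro j k
    rw [← Complex.exp_conj, ← Complex.exp_nat_mul, ← Complex.exp_nat_mul, ← Complex.exp_add]
    congr 1
    simp [Complex.conj_ofReal]
    ring
  have h : (Complex.normSq (trigEval P v) : ℂ) = ∑ j ∈ range D, ∑ k ∈ range D,
      ((P.coeff j * P.coeff k : ℝ) : ℂ) * Complex.exp (((j - k : ℝ) * v : ℝ) * Complex.I) := by
    rw [← Complex.mul_conj, trigEval, aeval_eq_sum_range' hD, map_sum, sum_mul_sum]
    refine sum_congr rfl fun j _ => sum_congr rfl fun k _ => ?_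
    rw [← hexp]
    simp only [Complex.real_smul, map_mul, Complex.conj_ofReal, map_pow]
    push_cast
    ring
  simpa only [Complex.ofReal_re, Complex.re_sum, Complex.re_ofReal_mul,
    Complex.exp_ofReal_mul_I_re] using congrArg Complex.re h

lemma sum_normSq_trigEval_node {P : ℝ[X]} {D N : ℕ} (hD : P.natDegree < D) (hDN : D ≤ N)
    (θ : ℝ) :
    ∑ t ∈ range N, Complex.normSq (trigEval P (node N t - θ))
      = N * ∑ j ∈ range D, P.coeff j ^ 2 := by
  simp_rw [normSq_trigEval hD, mul_sum]
  rw [sum_comm]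
  refine sum_congr rfl fun j hj => ?_
  rw [sum_comm]
  have hjN : j < N := (mem_range.1 hj).trans_le hDN
  rw [sum_congr rfl fun k hk => by
    rw [← mul_sum, sum_cos_mul_node_sub hjN ((mem_range.1 hk).trans_le hDN)]]
  simp [hj]
  ring

def cosPolynomials (d : ℕ) : Submodule ℝ (ℝ → ℝ) :=
  (degreeLE ℝ d).map (LinearMap.pi fun θ => leval (cos θ))

lemma mem_cosPolynomials {d : ℕ} {g : ℝ → ℝ} :
    g ∈ cosPolynomials d ↔ ∃ P : ℝ[X], P.natDegree ≤ d ∧ ∀ θ, P.eval (cos θ) = g θ := by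
  simp [cosPolynomials, mem_degreeLE, natDegree_le_iff_degree_le, funext_iff]

lemma cos_int_mul_mem_cosPolynomials {d : ℕ} {m : ℤ} (hm : m.natAbs ≤ d) :
    (fun θ => cos (m * θ)) ∈ cosPolynomials d :=
  mem_cosPolynomials.2 ⟨Chebyshev.T ℝ m, (Chebyshev.natDegree_T ℝ m).trans_le hm,
    fun θ => Chebyshev.T_real_cos θ m⟩

def fejerPoly (n : ℕ) : ℝ[X] := ∑ a ∈ range n, X ^ a

def fejerKernel (n : ℕ) (v : ℝ) : ℝ := Complex.normSq (trigEval (fejerPoly n) v)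

def jacksonKernel (n : ℕ) (v : ℝ) : ℝ := Complex.normSq (trigEval (fejerPoly n ^ 2) v)

lemma natDegree_fejerPoly_lt {n : ℕ} (hn : 0 < n) : (fejerPoly n).natDegree < n := by
  refine (natDegree_sum_le_of_forall_le _ _ (n := n - 1) fun a ha => ?_).trans_lt (by omega)
  rw [natDegree_X_pow]
  exact Nat.le_sub_one_of_lt (mem_range.1 ha)

lemma natDegree_fejerPoly_sq_lt {n : ℕ} (hn : 0 < n) :
    (fejerPoly n ^ 2).natDegree < 2 * n - 1 := by
  have := natDegree_fejerPoly_lt hn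
  have := natDegree_pow_le (p := fejerPoly n) (n := 2)
  omega

lemma coeff_fejerPoly {n j : ℕ} (hj : j < n) : (fejerPoly n).coeff j = 1 := by
  simp [fejerPoly, coeff_X_pow, hj]

lemma eval_one_fejerPoly_sq (n : ℕ) : (fejerPoly n ^ 2).eval 1 = (n : ℝ) ^ 2 := by
  simp [fejerPoly, eval_finsetSum]

lemma pow_four_le_mul_sum_coeff_fejerPoly_sq {n : ℕ} (hn : 0 < n) :
    (n : ℝ) ^ 4 ≤ (2 * n - 1 : ℕ) * ∑ j ∈ range (2 * n - 1), (fejerPoly n ^ 2).coeff j ^ 2 := by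
  have hsum := eval_one_fejerPoly_sq n
  rw [eval_eq_sum_range' (natDegree_fejerPoly_sq_lt hn)] at hsum
  simp only [one_pow, mul_one] at hsum
  have := sq_sum_le_card_mul_sum_sq (s := range (2 * n - 1)) (f := (fejerPoly n ^ 2).coeff)
  rw [hsum, card_range] at this
  linarith

lemma trigEval_fejerPoly_mul_exp_sub_one (n : ℕ) (v : ℝ) :
    trigEval (fejerPoly n) v * (Complex.exp (v * Complex.I) - 1)
      = Complex.exp (v * Complex.I) ^ n - 1 := by
  simp [trigEval, fejerPoly, geom_sum_mul]

lemma fejerKernel_mul_sin_sq_le_one (n : ℕ) (v : ℝ) : fejerKernel n v * sin (v / 2) ^ 2 ≤ 1 := by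
  have hnorm : ‖trigEval (fejerPoly n) v‖ * (2 * |sin (v / 2)|) ≤ 2 := by
    have h := congrArg norm (trigEval_fejerPoly_mul_exp_sub_one n v)
    rw [norm_mul, mul_comm (v : ℂ), Complex.norm_exp_I_mul_ofReal_sub_one, norm_mul,
      Real.norm_two, Real.norm_eq_abs] at h
    rw [h]
    refine (norm_sub_le _ _).trans ?_
    rw [norm_pow, Complex.norm_exp_I_mul_ofReal, one_pow, norm_one]
    norm_num
  rw [fejerKernel, Complex.normSq_eq_norm_sq, ← sq_abs (sin _), ← mul_pow]
  exact pow_le_one₀ (by positivity) (by linarith)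

lemma jacksonKernel_eq_fejerKernel_sq (n : ℕ) (v : ℝ) :
    jacksonKernel n v = fejerKernel n v ^ 2 := by
  rw [jacksonKernel, fejerKernel, trigEval, trigEval, map_pow, map_pow]

lemma jacksonKernel_mul_sin_sq_le (n : ℕ) (v : ℝ) :
    jacksonKernel n v * sin (v / 2) ^ 2 ≤ fejerKernel n v := by
  rw [jacksonKernel_eq_fejerKernel_sq, sq, mul_assoc]
  exact mul_le_of_le_one_right (Complex.normSq_nonneg _) (fejerKernel_mul_sin_sq_le_one n v)

lemma sum_fejerKernel_node {n N : ℕ} (hn : 0 < n) (hN : n ≤ N) (θ : ℝ) :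
    ∑ t ∈ range N, fejerKernel n (node N t - θ) = N * n := by
  unfold fejerKernel
  rw [sum_normSq_trigEval_node (natDegree_fejerPoly_lt hn) hN,
    sum_congr rfl fun j hj => by rw [coeff_fejerPoly (mem_range.1 hj)]]
  simp

lemma sum_jacksonKernel_node {n N : ℕ} (hn : 0 < n) (hN : 2 * n - 1 ≤ N) (θ : ℝ) :
    ∑ t ∈ range N, jacksonKernel n (node N t - θ)
      = N * ∑ j ∈ range (2 * n - 1), (fejerPoly n ^ 2).coeff j ^ 2 :=
  sum_normSq_trigEval_node (natDegree_fejerPoly_sq_lt hn) hN θ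

lemma jacksonKernel_sub_add_jacksonKernel_add_mem {n : ℕ} (hn : 0 < n) (u : ℝ) :
    (fun θ => jacksonKernel n (u - θ) + jacksonKernel n (u + θ))
      ∈ cosPolynomials (2 * n - 2) := by
  have hK : (fun θ => jacksonKernel n (u - θ) + jacksonKernel n (u + θ))
      = ∑ j ∈ range (2 * n - 1), ∑ k ∈ range (2 * n - 1),
        (2 * (fejerPoly n ^ 2).coeff j * (fejerPoly n ^ 2).coeff k * cos ((j - k : ℝ) * u)) •
          fun θ => cos (((j - k : ℤ) : ℝ) * θ) := by
    ext θ
    simp only [jacksonKernel, normSq_trigEval (natDegree_fejerPoly_sq_lt hn), ← sum_add_distrib,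
      Finset.sum_apply, Pi.smul_apply, smul_eq_mul]
    refine sum_congr rfl fun j _ => sum_congr rfl fun k _ => ?_
    push_cast
    rw [mul_sub, mul_add, cos_sub, cos_add]
    ring
  rw [hK]
  refine Submodule.sum_mem _ fun j hj => Submodule.sum_mem _ fun k hk => ?_
  refine Submodule.smul_mem _ _ (cos_int_mul_mem_cosPolynomials ?_)
  have := mem_range.1 hj
  have := mem_range.1 hk
  omega

def jacksonMean (f : ℝ → ℝ) (n N : ℕ) (θ : ℝ) : ℝ :=
  (range N).centerMass (fun t => jacksonKernel n (node N t - θ)) (fun t => f (cos (node N t)))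

lemma jacksonMean_eq (f : ℝ → ℝ) {n N : ℕ} (hn : 0 < n) (hN : 2 * n - 1 ≤ N) (θ : ℝ) :
    jacksonMean f n N θ = (N * ∑ j ∈ range (2 * n - 1), (fejerPoly n ^ 2).coeff j ^ 2)⁻¹ *
      ∑ t ∈ range N, f (cos (node N t)) * jacksonKernel n (node N t - θ) := by
  simp only [jacksonMean, centerMass, sum_jacksonKernel_node hn hN, smul_eq_mul, mul_comm (f _)]

lemma jacksonMean_add_neg_div_two_mem (f : ℝ → ℝ) {n N : ℕ} (hn : 0 < n)
    (hN : 2 * n - 1 ≤ N) :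
    (fun θ => (jacksonMean f n N θ + jacksonMean f n N (-θ)) / 2)
      ∈ cosPolynomials (2 * n - 2) := by
  set A := (N : ℝ) * ∑ j ∈ range (2 * n - 1), (fejerPoly n ^ 2).coeff j ^ 2
  have hJ : (fun θ => (jacksonMean f n N θ + jacksonMean f n N (-θ)) / 2)
      = (2 * A)⁻¹ • ∑ t ∈ range N, f (cos (node N t)) •
          fun θ => jacksonKernel n (node N t - θ) + jacksonKernel n (node N t + θ) := by
    ext θ
    simp only [jacksonMean_eq f hn hN, sub_neg_eq_add, Finset.sum_apply, Pi.smul_apply,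
      smul_eq_mul, mul_add, sum_add_distrib]
    ring
  rw [hJ]
  exact Submodule.smul_mem _ _ (Submodule.sum_mem _ fun t _ =>
    Submodule.smul_mem _ _ (jacksonKernel_sub_add_jacksonKernel_add_mem hn _))

lemma abs_jacksonMean_sub_le {f : ℝ → ℝ} {L : ℝ} (hL : 0 ≤ L)
    (hf : ∀ x ∈ Set.Icc (-1 : ℝ) 1, ∀ y ∈ Set.Icc (-1 : ℝ) 1, |f x - f y| ≤ L * |x - y|)
    {n N : ℕ} (hn : 0 < n) (hN : 2 * n - 1 ≤ N) (θ : ℝ) :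
    |jacksonMean f n N θ - f (cos θ)| ≤ 2 * √2 * L / n := by
  set S := ∑ j ∈ range (2 * n - 1), (fejerPoly n ^ 2).coeff j ^ 2
  have hn' : (0 : ℝ) < n := Nat.cast_pos.2 hn
  have hN' : (0 : ℝ) < N := Nat.cast_pos.2 (by omega)
  have hS : (n : ℝ) ^ 3 ≤ 2 * S := by
    have h2n : ((2 * n - 1 : ℕ) : ℝ) ≤ 2 * n := by
      rw [Nat.cast_sub (by omega)]; push_cast; linarith
    have := pow_four_le_mul_sum_coeff_fejerPoly_sq hn
    have : 0 ≤ S := sum_nonneg fun j _ => sq_nonneg _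
    nlinarith
  have hS0 : 0 < S := by nlinarith [pow_pos hn' 3]
  have h := abs_centerMass_sub_le (s := range N) (w := fun t => jacksonKernel n (node N t - θ))
    (g := fun t => f (cos (node N t))) (e := fun t => sin ((node N t - θ) / 2))
    (y := f (cos θ)) (B := N * n) (c := 2 * L)
    (fun t _ => Complex.normSq_nonneg _)
    (by rw [sum_jacksonKernel_node hn hN]; positivity) (by positivity)
    (fun t _ => abs_comp_cos_sub_comp_cos_le hL hf _ _)
    ((sum_le_sum fun t _ => jacksonKernel_mul_sin_sq_le n _).trans
      (sum_fejerKernel_node hn (by omega) θ).le)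
  have hsqrt : √(N * n / (N * S)) ≤ √2 / n := by
    rw [Real.sqrt_le_iff, div_pow, Real.sq_sqrt zero_le_two,
      div_le_div_iff₀ (by positivity) (by positivity)]
    exact ⟨by positivity, by nlinarith⟩
  calc |jacksonMean f n N θ - f (cos θ)| ≤ 2 * L * √(N * n / (N * S)) := by
        rwa [sum_jacksonKernel_node hn hN] at h
    _ ≤ 2 * L * (√2 / n) := by gcongr
    _ = 2 * √2 * L / n := by ring

lemma two_mul_sqrt_two_mul_div_le {L : ℝ} (hL : 0 ≤ L) {r : ℕ} (hr : 0 < r) :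
    2 * √2 * L / (r / 2 + 1 : ℕ) ≤ 6 * L / r := by
  have hrn : (r : ℝ) < 2 * (r / 2 + 1 : ℕ) := by exact_mod_cast (by omega : r < 2 * (r / 2 + 1))
  have hr' : (0 : ℝ) < r := Nat.cast_pos.2 hr
  have hsqrt2 : √2 ≤ 3 / 2 := Real.sqrt_le_iff.2 ⟨by norm_num, by norm_num⟩
  rw [div_le_div_iff₀ (by positivity) hr']
  nlinarith [mul_le_mul_of_nonneg_left hsqrt2 (mul_nonneg hL hr'.le)]

/-- Jackson's theorem: every `L`-Lipschitz function on `[-1,1]` is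
uniformly approximated to within `6L/r` by a polynomial of degree at most `r`. -/
theorem jackson (f : ℝ → ℝ) (L : ℝ) (hL : 0 ≤ L)
    (hf : ∀ x ∈ Set.Icc (-1 : ℝ) 1, ∀ y ∈ Set.Icc (-1 : ℝ) 1,
      |f x - f y| ≤ L * |x - y|)
    (r : ℕ) (hr : 1 ≤ r) :
    ∃ p : Polynomial ℝ, p.natDegree ≤ r ∧
      ∀ x ∈ Set.Icc (-1 : ℝ) 1, |p.eval x - f x| ≤ 6 * L / r := by
  set n := r / 2 + 1
  set J := jacksonMean f n (2 * n)
  obtain ⟨P, hdeg, hP⟩ := mem_cosPolynomials.1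
    (jacksonMean_add_neg_div_two_mem f (n := n) (N := 2 * n) (Nat.succ_pos _) (by omega))
  refine ⟨P, hdeg.trans (by omega), fun x ⟨hx₁, hx₂⟩ => ?_⟩
  set θ := arccos x
  have hθ := abs_jacksonMean_sub_le hL hf (n := n) (N := 2 * n) (Nat.succ_pos _) (by omega) θ
  have hθ' := abs_jacksonMean_sub_le hL hf (n := n) (N := 2 * n) (Nat.succ_pos _) (by omega) (-θ)
  rw [cos_neg] at hθ'
  have hrate := two_mul_sqrt_two_mul_div_le hL (r := r) (by omega)
  rw [← cos_arccos hx₁ hx₂, hP, show (J θ + J (-θ)) / 2 - f (cos θ)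
    = ((J θ - f (cos θ)) + (J (-θ) - f (cos θ))) / 2 by ring, abs_div, abs_two]
  linarith [abs_add_le (J θ - f (cos θ)) (J (-θ) - f (cos θ))]
end
end
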